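/- arXiv:2507.02151 — 3 statements merged into one kernel-verified Lean document; each statement's English description precedes it below -/
import Mathlib

section
/- Let n ≥ 1, let α ∈ (0,1) with ⌈(1-α)(n+1)⌉ ≤ n, and let S_1, …, S_{n+1} be real-valued random variables on a probability space whose joint law is exchangeable. Let q̂ be the k-th smallest value among S_1, …, S_n, where k = ⌈(1-α)(n+1)⌉. Then P(S_{n+1} ≤ q̂) ≥ 1 − α. (This is the split conformal coverage guarantee, Theorem 2.1 of the paper, stated with non-conformity scores: the prediction set C(x_{n+1}) = {y : s(x_{n+1}, y) ≤ q̂} built from calibration scores S_i = s(x_i, y_i) contains the true label with probability at least 1 − α.) -/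
open MeasureTheory Finset
open scoped ENNReal

/-- Number of coordinates strictly below `t`. -/
noncomputable def cnt {m : ℕ} (x : Fin m → ℝ) (t : ℝ) : ℕ :=
  (Finset.univ.filter (fun i => x i < t)).card

lemma cnt_comp_perm {m : ℕ} (x : Fin m → ℝ) (σ : Equiv.Perm (Fin m)) (t : ℝ) :
    cnt (x ∘ σ) t = cnt x t := by
  unfold cnt
  exact Finset.card_equiv σ (by simp)

lemma cnt_le_of_le_sorted {m : ℕ} {g : Fin m → ℝ} (hg : Monotone g) {j : Fin m} {t : ℝ}
    (h : t ≤ g j) : cnt g t ≤ j.val := by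
  have hsub : (Finset.univ.filter (fun i => g i < t)) ⊆ Finset.Iio j := by
    intro i hi
    simp only [Finset.mem_filter] at hi
    rw [Finset.mem_Iio]
    by_contra hij
    exact absurd (le_trans h (hg (not_lt.mp hij))) (not_le.mpr hi.2)
  calc cnt g t ≤ (Finset.Iio j).card := Finset.card_le_card hsub
    _ = j.val := Fin.card_Iio j

lemma lt_of_cnt_le_sorted {m : ℕ} {g : Fin m → ℝ} (hg : Monotone g) {j : Fin m} {t : ℝ}
    (h : cnt g t ≤ j.val) : t ≤ g j := by
  by_contra hlt
  push_neg at hlt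
  have hsub : Finset.Iic j ⊆ (Finset.univ.filter (fun i => g i < t)) := by
    intro i hi
    rw [Finset.mem_Iic] at hi
    simp only [Finset.mem_filter, Finset.mem_univ, true_and]
    exact lt_of_le_of_lt (hg hi) hlt
  have := Finset.card_le_card hsub
  rw [Fin.card_Iic] at this
  unfold cnt at h
  omega

/-- At least `k` coordinates have strict-rank `< k`. -/
lemma card_small_rank {m : ℕ} (x : Fin m → ℝ) {k : ℕ} (hk1 : 1 ≤ k) (hkm : k ≤ m) :
    k ≤ (Finset.univ.filter (fun j => cnt x (x j) < k)).card := by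
  set σ := Tuple.sort x with hσ
  have hg : Monotone (x ∘ σ) := Tuple.monotone_sort x
  have key : ∀ i : Fin m, i.val < k → cnt x (x (σ i)) < k := by
    intro i hi
    have h1 : cnt (x ∘ σ) ((x ∘ σ) i) ≤ i.val := cnt_le_of_le_sorted hg le_rfl
    have h2 : cnt (x ∘ σ) ((x ∘ σ) i) = cnt x (x (σ i)) := cnt_comp_perm x σ _
    omega
  have hsub : (Finset.Iio (⟨k - 1, by omega⟩ : Fin m) ∪ {⟨k-1, by omega⟩}).image σ ⊆
      Finset.univ.filter (fun j => cnt x (x j) < k) := by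
    intro j hj
    simp only [Finset.mem_image, Finset.mem_union, Finset.mem_Iio, Finset.mem_singleton] at hj
    obtain ⟨i, hi, rfl⟩ := hj
    simp only [Finset.mem_filter, Finset.mem_univ, true_and]
    apply key
    rcases hi with hi | rfl
    · have : i.val < k - 1 := hi
      omega
    · simp; omega
  have hcard : ((Finset.Iio (⟨k - 1, by omega⟩ : Fin m) ∪ {⟨k-1, by omega⟩}).image σ).card = k := by
    rw [Finset.card_image_of_injective _ σ.injective]
    rw [Finset.card_union_of_disjoint (by simp)]
    rw [Fin.card_Iio, Finset.card_singleton]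
    simp; omega
  calc k = _ := hcard.symm
    _ ≤ _ := Finset.card_le_card hsub

lemma cnt_castSucc {m : ℕ} (x : Fin (m + 1) → ℝ) :
    cnt x (x (Fin.last m)) = cnt (fun i : Fin m => x (Fin.castSucc i)) (x (Fin.last m)) := by
  unfold cnt
  rw [Finset.card_filter, Finset.card_filter, Fin.sum_univ_castSucc]
  simp

/-- **Split conformal coverage guarantee** (Theorem 2.1).
For exchangeable scores `S 0, …, S n` (the first `n` being calibration scores and
`S (Fin.last n)` the test score), letting `q̂` be the `k`-th smallest calibration score
with `k = ⌈(1-α)(n+1)⌉ ≤ n`, the test score is at most `q̂` with probability `≥ 1 - α`. -/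
theorem split_conformal_coverage
    {Ω : Type*} [MeasurableSpace Ω] (P : Measure Ω) [IsProbabilityMeasure P]
    (n : ℕ) (hn : 1 ≤ n) (α : ℝ) (hα : α ∈ Set.Ioo (0 : ℝ) 1)
    (S : Fin (n + 1) → Ω → ℝ) (hmeas : ∀ i, Measurable (S i))
    (hexch : ∀ π : Equiv.Perm (Fin (n + 1)),
      P.map (fun ω => fun i => S (π i) ω) = P.map (fun ω => fun i => S i ω))
    (k : ℕ) (hk : k = ⌈(1 - α) * ((n : ℝ) + 1)⌉₊) (hkn : k ≤ n)
    (qhat : Ω → ℝ)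
    (hqhat : ∀ ω, qhat ω =
      (fun i : Fin n => S (Fin.castSucc i) ω)
        (Tuple.sort (fun i : Fin n => S (Fin.castSucc i) ω) ⟨k - 1, by omega⟩)) :
    1 - α ≤ (P {ω | S (Fin.last n) ω ≤ qhat ω}).toReal := by
  obtain ⟨hα0, hα1⟩ := hα
  have hk1 : 1 ≤ k := by
    rw [hk, Nat.one_le_ceil_iff]
    have : (0:ℝ) < 1 - α := by linarith
    positivity
  set X : Ω → Fin (n + 1) → ℝ := fun ω i => S i ω with hXdef
  have hXm : Measurable X := measurable_pi_lambda _ hmeas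
  have hcntm : ∀ j : Fin (n + 1), Measurable (fun x : Fin (n + 1) → ℝ => cnt x (x j)) := by
    intro j
    unfold cnt
    simp_rw [Finset.card_filter]
    apply Finset.measurable_sum
    intro i _
    exact Measurable.ite (measurableSet_lt (measurable_pi_apply i) (measurable_pi_apply j))
      measurable_const measurable_const
  set B : Fin (n + 1) → Set (Fin (n + 1) → ℝ) := fun j => {x | cnt x (x j) < k} with hBdef
  have hBm : ∀ j, MeasurableSet (B j) :=
    fun j => measurableSet_lt (hcntm j) measurable_const
  have hprob : ∀ j, P (X ⁻¹' (B j)) = P (X ⁻¹' (B (Fin.last n))) := by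
    intro j
    have hπ := hexch (Equiv.swap j (Fin.last n))
    have hY : Measurable (fun ω => fun i => S ((Equiv.swap j (Fin.last n)) i) ω) :=
      measurable_pi_lambda _ (fun i => hmeas _)
    have h1 : P (X ⁻¹' (B j)) =
        (P.map (fun ω => fun i => S ((Equiv.swap j (Fin.last n)) i) ω)) (B (Fin.last n)) := by
      rw [Measure.map_apply hY (hBm _)]
      congr 1
      ext ω
      simp only [Set.mem_preimage, hBdef, Set.mem_setOf_eq]
      have h2 : (fun i => S ((Equiv.swap j (Fin.last n)) i) ω) =
          (X ω) ∘ (Equiv.swap j (Fin.last n)) := rfl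
      rw [h2, cnt_comp_perm]
      simp only [Function.comp_apply, Equiv.swap_apply_right]
      exact Iff.rfl
    rw [h1, hπ, Measure.map_apply hXm (hBm _)]
  have hsum : (k : ℝ≥0∞) ≤ ∑ j : Fin (n + 1), P (X ⁻¹' (B j)) := by
    have heq : ∀ j : Fin (n + 1), P (X ⁻¹' (B j)) =
        ∫⁻ ω, Set.indicator (X ⁻¹' (B j)) (1 : Ω → ℝ≥0∞) ω ∂P := by
      intro j
      rw [lintegral_indicator_one (hXm (hBm j))]
    calc (k : ℝ≥0∞) = ∫⁻ _, (k : ℝ≥0∞) ∂P := by simp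
      _ ≤ ∫⁻ ω, ∑ j : Fin (n + 1),
            Set.indicator (X ⁻¹' (B j)) (1 : Ω → ℝ≥0∞) ω ∂P := by
          apply lintegral_mono
          intro ω
          show (k : ℝ≥0∞) ≤ ∑ j : Fin (n + 1),
            Set.indicator (X ⁻¹' (B j)) (1 : Ω → ℝ≥0∞) ω
          have hpt : ∑ j : Fin (n + 1),
              Set.indicator (X ⁻¹' (B j)) (1 : Ω → ℝ≥0∞) ω
              = ((Finset.univ.filter (fun j => cnt (X ω) (X ω j) < k)).card : ℝ≥0∞) := by
            rw [Finset.card_filter, Nat.cast_sum]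
            apply Finset.sum_congr rfl
            intro j _
            simp only [Set.indicator_apply, Set.mem_preimage, hBdef, Set.mem_setOf_eq,
              Pi.one_apply]
            by_cases hmem : cnt (X ω) (X ω j) < k <;> simp [hmem]
          rw [hpt]
          exact Nat.cast_le.mpr (card_small_rank (X ω) hk1 (by omega))
      _ = ∑ j : Fin (n + 1), ∫⁻ ω,
            Set.indicator (X ⁻¹' (B j)) (1 : Ω → ℝ≥0∞) ω ∂P :=
          lintegral_finset_sum _ (fun j _ =>
            (measurable_const.indicator (hXm (hBm j))))
      _ = ∑ j : Fin (n + 1), P (X ⁻¹' (B j)) :=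
          Finset.sum_congr rfl (fun j _ => (heq j).symm)
  have hconst : ∑ j : Fin (n + 1), P (X ⁻¹' (B j))
      = (n + 1) * P (X ⁻¹' (B (Fin.last n))) := by
    rw [Finset.sum_congr rfl (fun j _ => hprob j)]
    simp [Finset.sum_const, Finset.card_univ, nsmul_eq_mul]
  set c := P (X ⁻¹' (B (Fin.last n))) with hcdef
  have hc : (k : ℝ≥0∞) ≤ ((n : ℝ≥0∞) + 1) * c := by
    rw [hconst] at hsum
    exact_mod_cast hsum
  have hset : {ω | S (Fin.last n) ω ≤ qhat ω} = X ⁻¹' (B (Fin.last n)) := by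
    ext ω
    simp only [Set.mem_setOf_eq, Set.mem_preimage, hBdef, Set.mem_setOf_eq]
    rw [hqhat ω]
    set f : Fin n → ℝ := fun i => S (Fin.castSucc i) ω with hf
    have hg : Monotone (f ∘ Tuple.sort f) := Tuple.monotone_sort f
    have hcc : cnt (X ω) (X ω (Fin.last n)) = cnt f (S (Fin.last n) ω) :=
      cnt_castSucc (X ω)
    constructor
    · intro h
      have h1 : cnt (f ∘ Tuple.sort f) (S (Fin.last n) ω) ≤ (⟨k - 1, by omega⟩ : Fin n).val :=
        cnt_le_of_le_sorted hg h
      rw [cnt_comp_perm] at h1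
      rw [hcc]
      simp only [Fin.val_mk] at h1
      omega
    · intro h
      rw [hcc] at h
      have h1 : cnt (f ∘ Tuple.sort f) (S (Fin.last n) ω) ≤ (⟨k - 1, by omega⟩ : Fin n).val := by
        rw [cnt_comp_perm]
        simp only [Fin.val_mk]
        omega
      exact lt_of_cnt_le_sorted hg h1
  rw [hset]
  have hcfin : ((n : ℝ≥0∞) + 1) * c ≠ ∞ :=
    ENNReal.mul_ne_top (by simp) (measure_ne_top P _)
  have hreal : (k : ℝ) ≤ ((n : ℝ) + 1) * c.toReal := by
    have := ENNReal.toReal_mono hcfin hc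
    rw [ENNReal.toReal_mul] at this
    have e : ((n : ℝ≥0∞) + 1).toReal = (n : ℝ) + 1 := by
      rw [ENNReal.toReal_add (by simp) (by simp)]; simp
    simpa [e] using this
  have hceil : (1 - α) * ((n : ℝ) + 1) ≤ (k : ℝ) := by
    rw [hk]
    exact Nat.le_ceil _
  have hn1 : (0 : ℝ) < (n : ℝ) + 1 := by positivity
  have hfin : ((n : ℝ) + 1) * (1 - α) ≤ ((n : ℝ) + 1) * c.toReal := by nlinarith
  exact le_of_mul_le_mul_left hfin hn1
end

section
/- Let n ≥ 1 and let S_1, …, S_{n+1} be real-valued random variables on a probability space whose joint law is exchangeable and which are almost surely pairwise distinct. Then the rank of the test score is uniformly distributed: for every k ∈ {0, 1, …, n}, P(#{i ∈ {1,…,n} : S_i < S_{n+1}} = k) = 1/(n+1). -/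
open MeasureTheory
open scoped ENNReal

namespace RankUniformAux

variable {n : ℕ}

/-- Number of coordinates strictly below coordinate `j`. -/
noncomputable def cnt (j : Fin (n+1)) (x : Fin (n+1) → ℝ) : ℕ :=
  (Finset.univ.filter (fun i => x i < x j)).card

lemma cnt_le (j : Fin (n+1)) (x : Fin (n+1) → ℝ) : cnt j x ≤ n := by
  have h : (Finset.univ.filter (fun i => x i < x j)) ⊆ Finset.univ.erase j := by
    intro i hi
    simp only [Finset.mem_filter] at hi
    refine Finset.mem_erase.2 ⟨?_, Finset.mem_univ _⟩
    rintro rfl; exact lt_irrefl _ hi.2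
  calc cnt j x ≤ (Finset.univ.erase j).card := Finset.card_le_card h
    _ = n := by simp

lemma cnt_injective {x : Fin (n+1) → ℝ} (hx : ∀ i j : Fin (n+1), i ≠ j → x i ≠ x j) :
    Function.Injective (fun j => cnt j x) := by
  have key : ∀ i j : Fin (n+1), x i < x j → cnt i x < cnt j x := by
    intro i j hij
    apply Finset.card_lt_card
    constructor
    · intro a ha
      simp only [Finset.mem_filter] at ha ⊢
      exact ⟨ha.1, ha.2.trans hij⟩
    · intro hsub
      have hi : i ∈ Finset.univ.filter (fun a => x a < x j) := Finset.mem_filter.mpr ⟨Finset.mem_univ i, hij⟩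
      have := hsub hi
      simp only [Finset.mem_filter] at this
      exact lt_irrefl _ this.2
  intro i j h
  by_contra hne
  rcases lt_trichotomy (x i) (x j) with h1 | h1 | h1
  · exact absurd h (key i j h1).ne
  · exact hx i j hne h1
  · exact absurd h.symm (key j i h1).ne

lemma cnt_measurable (j : Fin (n+1)) : Measurable (cnt j) := by
  have : cnt j = fun x => ∑ i : Fin (n+1), if x i < x j then 1 else 0 := by
    funext x; unfold cnt; rw [Finset.card_filter]
  rw [this]
  exact Finset.measurable_sum _ fun i _ =>
    Measurable.ite (measurableSet_lt (measurable_pi_apply i) (measurable_pi_apply j))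
      measurable_const measurable_const

lemma cnt_comp (π : Equiv.Perm (Fin (n+1))) (j : Fin (n+1)) (x : Fin (n+1) → ℝ) :
    cnt j (fun i => x (π i)) = cnt (π j) x := by
  unfold cnt
  apply Finset.card_bij (fun i _ => π i)
  · intro a ha
    simp only [Finset.mem_filter] at ha ⊢
    exact ⟨Finset.mem_univ _, ha.2⟩
  · intro a _ b _ h
    exact π.injective h
  · intro b hb
    simp only [Finset.mem_filter] at hb
    exact ⟨π.symm b, by simpa using hb.2, by simp⟩

lemma target_eq (x : Fin (n+1) → ℝ) :
    (Finset.univ.filter (fun i : Fin n => x (Fin.castSucc i) < x (Fin.last n))).card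
      = cnt (Fin.last n) x := by
  unfold cnt
  apply Finset.card_bij (fun i _ => Fin.castSucc i)
  · intro a ha
    simp only [Finset.mem_filter] at ha ⊢
    exact ⟨Finset.mem_univ _, ha.2⟩
  · intro a _ b _ h
    exact Fin.castSucc_injective n h
  · intro b hb
    simp only [Finset.mem_filter] at hb
    have hb' : b ≠ Fin.last n := by rintro rfl; exact lt_irrefl _ hb.2
    refine ⟨b.castPred hb', ?_, by simp⟩
    simp [hb.2]

lemma exists_unique_cnt {x : Fin (n+1) → ℝ} (hx : ∀ i j : Fin (n+1), i ≠ j → x i ≠ x j)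
    {k : ℕ} (hk : k ≤ n) : ∃! j, cnt j x = k := by
  have hinj : Function.Injective
      (fun j => (⟨cnt j x, Nat.lt_succ_of_le (cnt_le j x)⟩ : Fin (n+1))) := by
    intro i j h
    exact cnt_injective hx (by simpa [Fin.mk.injEq] using h)
  have hsurj := Finite.injective_iff_surjective.mp hinj
  obtain ⟨j, hj⟩ := hsurj ⟨k, Nat.lt_succ_of_le hk⟩
  have hjk : cnt j x = k := by simpa using congrArg Fin.val hj
  refine ⟨j, hjk, fun y hy => ?_⟩
  exact cnt_injective hx (by simp [hy, hjk])

end RankUniformAux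

open RankUniformAux

/-- **Rank uniformity for exchangeable, a.s. pairwise-distinct scores.** -/
theorem rank_uniform_exchangeable
    {Ω : Type*} [MeasurableSpace Ω] (P : Measure Ω) [IsProbabilityMeasure P]
    (n : ℕ) (hn : 1 ≤ n)
    (S : Fin (n + 1) → Ω → ℝ) (hmeas : ∀ i, Measurable (S i))
    (hexch : ∀ π : Equiv.Perm (Fin (n + 1)),
      P.map (fun ω => fun i => S (π i) ω) = P.map (fun ω => fun i => S i ω))
    (hdist : ∀ᵐ ω ∂P, ∀ i j : Fin (n + 1), i ≠ j → S i ω ≠ S j ω)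
    (k : ℕ) (hk : k ≤ n) :
    P {ω | (Finset.univ.filter
        (fun i : Fin n => S (Fin.castSucc i) ω < S (Fin.last n) ω)).card = k}
      = ((n : ℝ≥0∞) + 1)⁻¹ := by
  classical
  set T : Ω → (Fin (n+1) → ℝ) := fun ω i => S i ω with hT
  have hTmeas : Measurable T := measurable_pi_lambda _ hmeas
  set B : Fin (n+1) → Set (Fin (n+1) → ℝ) := fun j => (cnt j) ⁻¹' {k} with hBdef
  have hB : ∀ j, MeasurableSet (B j) := fun j =>
    (cnt_measurable j) (MeasurableSet.singleton k)
  set E : Fin (n+1) → Set Ω := fun j => T ⁻¹' (B j) with hEdef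
  have hE : ∀ j, MeasurableSet (E j) := fun j => hTmeas (hB j)
  -- all E j have the same probability
  have hsame : ∀ j, P (E j) = P (E (Fin.last n)) := by
    intro j
    have hπ := hexch (Equiv.swap j (Fin.last n))
    have hmeasπ : Measurable (fun ω => fun i => S (Equiv.swap j (Fin.last n) i) ω) :=
      measurable_pi_lambda _ fun i => hmeas _
    have h1 := congrArg (fun μ => μ (B (Fin.last n))) hπ
    rw [Measure.map_apply hmeasπ (hB _), Measure.map_apply hTmeas (hB _)] at h1
    have hpre : (fun ω => fun i => S (Equiv.swap j (Fin.last n) i) ω) ⁻¹' (B (Fin.last n))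
        = E j := by
      ext ω
      simp only [Set.mem_preimage, hBdef, Set.mem_singleton_iff, hEdef]
      rw [show (fun i => S (Equiv.swap j (Fin.last n) i) ω)
            = (fun i => T ω (Equiv.swap j (Fin.last n) i)) from rfl,
          cnt_comp, Equiv.swap_apply_right]
    rw [hpre] at h1
    exact h1
  -- a.e. the sets E j partition Ω
  have hone : ∀ᵐ ω ∂P, ∑ j : Fin (n+1), (E j).indicator (fun _ => (1 : ℝ≥0∞)) ω = 1 := by
    filter_upwards [hdist] with ω hω
    obtain ⟨j₀, hj₀, huniq⟩ := exists_unique_cnt (x := T ω) (fun i j hij => hω i j hij) hk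
    rw [Finset.sum_eq_single j₀]
    · simp [Set.indicator_of_mem, hEdef, hBdef, Set.mem_preimage, hj₀]
    · intro b _ hb
      have hbmem : ω ∉ E b := by
        simp only [hEdef, Set.mem_preimage, hBdef, Set.mem_singleton_iff]
        intro hc
        exact hb (huniq b hc)
      simp [Set.indicator_of_notMem hbmem]
    · intro h; exact absurd (Finset.mem_univ j₀) h
  have hsum : ∑ j : Fin (n+1), P (E j) = 1 := by
    have : ∀ j : Fin (n+1), P (E j)
        = ∫⁻ ω, (E j).indicator (fun _ => (1 : ℝ≥0∞)) ω ∂P := by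
      intro j
      rw [lintegral_indicator (hE j)]
      simp
    simp_rw [this]
    rw [← lintegral_finset_sum _ (fun j _ => (measurable_const.indicator (hE j)))]
    rw [lintegral_congr_ae hone]
    simp
  have hcard : ((n : ℝ≥0∞) + 1) * P (E (Fin.last n)) = 1 := by
    have := hsum
    rw [Finset.sum_congr rfl (fun j _ => hsame j), Finset.sum_const] at this
    simpa [Finset.card_univ, mul_comm, Nat.cast_add, Nat.cast_one, add_comm] using this
  have hPE : P (E (Fin.last n)) = ((n : ℝ≥0∞) + 1)⁻¹ := by
    have hne : ((n : ℝ≥0∞) + 1) ≠ 0 := fun h => one_ne_zero ((add_eq_zero.mp h).2)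
    have hnetop : ((n : ℝ≥0∞) + 1) ≠ ⊤ := by
      simp [ENNReal.add_ne_top]
    calc P (E (Fin.last n)) = (((n : ℝ≥0∞) + 1)⁻¹ * ((n : ℝ≥0∞) + 1)) * P (E (Fin.last n)) := by
          rw [ENNReal.inv_mul_cancel hne hnetop, one_mul]
      _ = ((n : ℝ≥0∞) + 1)⁻¹ * (((n : ℝ≥0∞) + 1) * P (E (Fin.last n))) := by ring
      _ = ((n : ℝ≥0∞) + 1)⁻¹ := by rw [hcard, mul_one]
  have hset : {ω | (Finset.univ.filter
        (fun i : Fin n => S (Fin.castSucc i) ω < S (Fin.last n) ω)).card = k}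
      = E (Fin.last n) := by
    ext ω
    simp only [Set.mem_setOf_eq, hEdef, Set.mem_preimage, hBdef, Set.mem_singleton_iff]
    rw [← target_eq (T ω)]
  rw [hset, hPE]
end

section
/- Let n ≥ 1, let s_1, …, s_{n+1} ∈ ℝ, let ω̃_1, …, ω̃_{n+1} ≥ 0 with Σ_{i=1}^{n+1} ω̃_i = 1, and let α ∈ (0,1). Fix k ∈ {1,…,n} and suppose ω̃_{n+1} ≥ ω̃_k and s_{n+1} ≥ s_k. Let φ = (s_1, …, s_{n+1}) and let φ^k = (s_1, …, s_{k−1}, s_{n+1}, s_{k+1}, …, s_n, s_k) be the vector with entries k and n+1 swapped. Then for every t ∈ ℝ, the weighted empirical CDF of φ^k dominates that of φ, i.e. Σ_{i : φ^k_i ≤ t} ω̃_i ≥ Σ_{i : φ_i ≤ t} ω̃_i, and consequently the weighted (1−α)-quantiles satisfy Q_{1−α}(Σ_i ω̃_i δ_{φ_i}) ≥ Q_{1−α}(Σ_i ω̃_i δ_{φ^k_i}). (This is the swap-monotonicity claim, Eq. 17–21, in the appendix proof of Lemma 3.4: assigning the larger weight to the larger score can only increase the weighted quantile, and the difference of the weighted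 sums equals (ω̃_{n+1} − ω̃_k)(s_{n+1} − s_k) ≥ 0.) -/
/-!
Swapping the scores at `a` and `b` only changes the weights carried by those two points, and the
weighted CDF at `t` changes by `(1[s a ≤ t] - 1[s b ≤ t]) (w b - w a)`, a product of two
nonnegative factors when `s a ≤ s b` and `w a ≤ w b`. A pointwise larger CDF crosses every level
earlier, so the quantile of the swapped vector is smaller.
-/

open Finset

noncomputable section

variable {ι : Type*} [Fintype ι]

def weightedCDF (w s : ι → ℝ) (t : ℝ) : ℝ :=
  ∑ i ∈ univ.filter (fun i => s i ≤ t), w i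

def weightedQuantile (w s : ι → ℝ) (β : ℝ) : ℝ :=
  sInf {t : ℝ | β ≤ weightedCDF w s t}

theorem weightedCDF_eq_sum_ite (w s : ι → ℝ) (t : ℝ) :
    weightedCDF w s t = ∑ i, if s i ≤ t then w i else 0 :=
  sum_filter _ _

theorem weightedCDF_eq_zero_of_lt {w s : ι → ℝ} {t : ℝ} (h : ∀ i, t < s i) :
    weightedCDF w s t = 0 :=
  sum_eq_zero fun i hi => absurd (mem_filter.mp hi).2 (h i).not_ge

theorem weightedCDF_eq_sum_of_le {w s : ι → ℝ} {t : ℝ} (h : ∀ i, s i ≤ t) :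
    weightedCDF w s t = ∑ i, w i := by
  rw [weightedCDF, filter_true_of_mem fun i _ => h i]

theorem weightedCDF_comp_swap_sub [DecidableEq ι] (w s : ι → ℝ) (a b : ι) (t : ℝ) :
    weightedCDF w (fun i => s (Equiv.swap a b i)) t - weightedCDF w s t
      = ((if s a ≤ t then 1 else 0) - (if s b ≤ t then 1 else 0)) * (w b - w a) := by
  obtain rfl | hab := eq_or_ne a b
  · simp
  rw [weightedCDF_eq_sum_ite, weightedCDF_eq_sum_ite, ← sum_sub_distrib,
    Fintype.sum_eq_add a b hab fun i hi => by rw [Equiv.swap_apply_of_ne_of_ne hi.1 hi.2, sub_self]]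
  simp only [Equiv.swap_apply_left, Equiv.swap_apply_right]
  split_ifs <;> ring

theorem weightedCDF_le_weightedCDF_comp_swap [DecidableEq ι] {w s : ι → ℝ} {a b : ι}
    (hw : w a ≤ w b) (hs : s a ≤ s b) (t : ℝ) :
    weightedCDF w s t ≤ weightedCDF w (fun i => s (Equiv.swap a b i)) t := by
  have hind : (if s b ≤ t then (1 : ℝ) else 0) ≤ if s a ≤ t then 1 else 0 := by
    split_ifs with hb ha
    exacts [le_rfl, absurd (hs.trans hb) ha, zero_le_one, le_rfl]
  rw [← sub_nonneg, weightedCDF_comp_swap_sub]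
  exact mul_nonneg (sub_nonneg.mpr hind) (sub_nonneg.mpr hw)

theorem nonempty_setOf_le_weightedCDF {w s : ι → ℝ} {β : ℝ} (hβ : β ≤ ∑ i, w i) :
    {t : ℝ | β ≤ weightedCDF w s t}.Nonempty := by
  obtain ⟨M, hM⟩ := Finite.bddAbove_range s
  exact ⟨M, by rwa [Set.mem_ofPred_eq, weightedCDF_eq_sum_of_le fun i => hM ⟨i, rfl⟩]⟩

theorem bddBelow_setOf_le_weightedCDF {w s : ι → ℝ} {β : ℝ} (hβ : 0 < β) :
    BddBelow {t : ℝ | β ≤ weightedCDF w s t} := by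
  obtain ⟨m, hm⟩ := Finite.bddBelow_range s
  refine ⟨m, fun t ht => not_lt.mp fun htm => ?_⟩
  have hzero := weightedCDF_eq_zero_of_lt (w := w) fun i => htm.trans_le (hm ⟨i, rfl⟩)
  exact hβ.not_ge (hzero ▸ ht)

theorem weightedQuantile_le_of_weightedCDF_le {w v s r : ι → ℝ} {β : ℝ}
    (hcdf : ∀ t, weightedCDF w s t ≤ weightedCDF v r t) (hβ₀ : 0 < β) (hβ : β ≤ ∑ i, w i) :
    weightedQuantile v r β ≤ weightedQuantile w s β :=
  csInf_le_csInf (bddBelow_setOf_le_weightedCDF hβ₀) (nonempty_setOf_le_weightedCDF hβ)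
    fun t ht => le_trans ht (hcdf t)

end

theorem weighted_quantile_swap_mono_general
    (n : ℕ) (s : Fin (n + 1) → ℝ) (wt : Fin (n + 1) → ℝ)
    (hsum : ∑ i, wt i = 1)
    (α : ℝ) (hα : α ∈ Set.Ioo (0 : ℝ) 1)
    (k : Fin n)
    (hwk : wt (Fin.castSucc k) ≤ wt (Fin.last n))
    (hsk : s (Fin.castSucc k) ≤ s (Fin.last n)) :
    (∀ t : ℝ,
        ∑ i ∈ univ.filter (fun i => s i ≤ t), wt i
          ≤ ∑ i ∈ univ.filter
              (fun i => s (Equiv.swap (Fin.castSucc k) (Fin.last n) i) ≤ t), wt i) ∧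
      sInf {t : ℝ | 1 - α ≤ ∑ i ∈ univ.filter
            (fun i => s (Equiv.swap (Fin.castSucc k) (Fin.last n) i) ≤ t), wt i}
        ≤ sInf {t : ℝ | 1 - α ≤ ∑ i ∈ univ.filter (fun i => s i ≤ t), wt i} := by
  have hcdf := weightedCDF_le_weightedCDF_comp_swap hwk hsk
  exact ⟨hcdf, weightedQuantile_le_of_weightedCDF_le hcdf (by linarith [hα.2])
    (by linarith [hα.1])⟩

/-- **Swap monotonicity of the weighted quantile** (Eq. 17–21 in the proof of Lemma 3.4).
If the weight of coordinate `n+1` dominates that of coordinate `k` and the score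
`s (n+1)` dominates `s k`, then swapping the two coordinates pointwise increases the
weighted empirical CDF, and consequently the weighted `(1−α)`-quantile of the swapped
vector `φᵏ` is at most that of the original vector `φ`. -/
theorem weighted_quantile_swap_mono
    (n : ℕ) (hn : 1 ≤ n) (s : Fin (n + 1) → ℝ) (wt : Fin (n + 1) → ℝ)
    (hwt : ∀ i, 0 ≤ wt i) (hsum : ∑ i, wt i = 1)
    (α : ℝ) (hα : α ∈ Set.Ioo (0 : ℝ) 1)
    (k : Fin n)
    (hwk : wt (Fin.castSucc k) ≤ wt (Fin.last n))
    (hsk : s (Fin.castSucc k) ≤ s (Fin.last n)) :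
    (∀ t : ℝ,
        ∑ i ∈ univ.filter (fun i => s i ≤ t), wt i
          ≤ ∑ i ∈ univ.filter
              (fun i => s (Equiv.swap (Fin.castSucc k) (Fin.last n) i) ≤ t), wt i) ∧
      sInf {t : ℝ | 1 - α ≤ ∑ i ∈ univ.filter
            (fun i => s (Equiv.swap (Fin.castSucc k) (Fin.last n) i) ≤ t), wt i}
        ≤ sInf {t : ℝ | 1 - α ≤ ∑ i ∈ univ.filter (fun i => s i ≤ t), wt i} :=
  weighted_quantile_swap_mono_general n s wt hsum α hα k hwk hsk
end
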